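/- Let a : H × H → ℝ be a symmetric positive semidefinite bilinear form, let u_{ij} ∈ H satisfy a(u_{ij}, u_{ji}) = a(u_{ii}, u_{jj}) for all i,j ∈ {1,2,3}, and let μ₀ > 0, λ₀ + μ₀ ≥ 0. Then λ₀ · a(Σ_j u_{jj}, Σ_j u_{jj}) + (μ₀/2) Σ_{i,j} a(u_{ij} + u_{ji}, u_{ij} + u_{ji}) ≥ μ₀ Σ_{i,j} a(u_{ij}, u_{ij}). -/

import Mathlib

/-!
By the exchange identity, the symmetrised sum `∑ a (u i j + u j i) (u i j + u j i)` equals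
`2 ∑ a (u i j) (u i j) + 2 a (tr u) (tr u)`, so the right-hand side exceeds `μ₀ ∑ a (u i j) (u i j)`
by exactly `(λ₀ + μ₀) a (tr u) (tr u) ≥ 0`.
-/

open Finset

section ExchangeIdentity

variable {R M ι : Type*} [CommRing R] [AddCommGroup M] [Module R M] [Fintype ι]
  (a : M →ₗ[R] M →ₗ[R] R)

lemma LinearMap.apply_sum_sum (v w : ι → M) :
    a (∑ i, v i) (∑ j, w j) = ∑ i, ∑ j, a (v i) (w j) := by
  simp only [map_sum, LinearMap.sum_apply]
  exact Finset.sum_comm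

lemma LinearMap.apply_add_add_of_symm (hsymm : ∀ x y, a x y = a y x) (x y : M) :
    a (x + y) (x + y) = a x x + a y y + 2 * a x y := by
  simp only [map_add, LinearMap.add_apply, hsymm y x]
  ring

lemma sum_apply_symmPart_of_exchange (hsymm : ∀ x y, a x y = a y x) (u : ι → ι → M)
    (hex : ∀ i j, a (u i j) (u j i) = a (u i i) (u j j)) :
    ∑ i, ∑ j, a (u i j + u j i) (u i j + u j i)
      = 2 * ∑ i, ∑ j, a (u i j) (u i j) + 2 * a (∑ j, u j j) (∑ j, u j j) := by
  have htranspose : ∑ i, ∑ j, a (u j i) (u j i) = ∑ i, ∑ j, a (u i j) (u i j) :=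
    Finset.sum_comm
  simp only [a.apply_add_add_of_symm hsymm, hex, sum_add_distrib, ← mul_sum, htranspose,
    a.apply_sum_sum]
  ring

end ExchangeIdentity

theorem lame_form_coercivity_general {H : Type*} [AddCommGroup H] [Module ℝ H]
    (a : H →ₗ[ℝ] H →ₗ[ℝ] ℝ) (hsymm : ∀ x y, a x y = a y x)
    (hpsd : ∀ x, 0 ≤ a x x)
    (u : Fin 3 → Fin 3 → H)
    (hex : ∀ i j, a (u i j) (u j i) = a (u i i) (u j j))
    (lam0 mu0 : ℝ) (hlm : 0 ≤ lam0 + mu0) :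
    mu0 * ∑ i, ∑ j, a (u i j) (u i j)
      ≤ lam0 * a (∑ j, u j j) (∑ j, u j j)
        + (mu0 / 2) * ∑ i, ∑ j, a (u i j + u j i) (u i j + u j i) := by
  rw [sum_apply_symmPart_of_exchange a hsymm u hex]
  have htrace := mul_nonneg hlm (hpsd (∑ j, u j j))
  linarith

theorem lame_form_coercivity {H : Type*} [AddCommGroup H] [Module ℝ H]
    (a : H →ₗ[ℝ] H →ₗ[ℝ] ℝ) (hsymm : ∀ x y, a x y = a y x)
    (hpsd : ∀ x, 0 ≤ a x x)
    (u : Fin 3 → Fin 3 → H)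
    (hex : ∀ i j, a (u i j) (u j i) = a (u i i) (u j j))
    (lam0 mu0 : ℝ) (hmu0 : 0 < mu0) (hlm : 0 ≤ lam0 + mu0) :
    mu0 * ∑ i, ∑ j, a (u i j) (u i j)
      ≤ lam0 * a (∑ j, u j j) (∑ j, u j j)
        + (mu0 / 2) * ∑ i, ∑ j, a (u i j + u j i) (u i j + u j i) :=
  lame_form_coercivity_general a hsymm hpsd u hex lam0 mu0 hlm
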